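/- An arbitrary product of regular simplicial sets is regular. -/

import Mathlib

open CategoryTheory GrothendieckTopology Simplicial Opposite Limits

namespace SSet

/-- Naturality of the Yoneda bijection for simplicial sets. -/
lemma yonedaEquiv_symm_naturality' {m n : SimplexCategory} (f : m ⟶ n) (X : SSet)
    (y : X.obj (op n)) :
    SSet.stdSimplex.map f ≫ (yonedaEquiv (X := X) (n := n)).symm y = (yonedaEquiv (X := X) (n := m)).symm (X.map f.op y) := by
  ext k x
  show X.map (x.down ≫ f).op y = X.map x.down.op (X.map f.op y)
  rw [op_comp, FunctorToTypes.map_comp_apply]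

universe v

variable (X : SSet.{v})

/-- A simplex is degenerate if it is the image of a simplex of strictly lower degree
under a simplicial operator. -/
def Degenerate {n : ℕ} (y : X _⦋n⦌) : Prop :=
  ∃ (m : ℕ) (σ : (⦋n⦌ : SimplexCategory) ⟶ ⦋m⦌) (z : X _⦋m⦌), m < n ∧ y = X.map σ.op z

/-- A simplex is non-degenerate if it is not degenerate. -/
def Nondegenerate {n : ℕ} (y : X _⦋n⦌) : Prop := ¬ X.Degenerate y

/-- The representing map `Δ[n] ⟶ X` of the `(n+1)`-st face `y ∘ δₙ₊₁` of an
`(n+1)`-simplex `y` of `X`. -/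
noncomputable def lastFaceMap {n : ℕ} (y : X _⦋n+1⦌) : Δ[n] ⟶ X :=
  (yonedaEquiv (X := X) (n := ⦋n⦌)).symm (X.map (SimplexCategory.δ (Fin.last (n+1))).op y)

/-- The canonical map `Δ[n+1] ⊔_{Δ[n]} Y' ⟶ X`, where `Y'` is the simplicial subset of `X`
generated by the last face of `y` (i.e. the image of the representing map of that face). -/
noncomputable def regularityMap {n : ℕ} (y : X _⦋n+1⦌) :
    pushout (SSet.stdSimplex.map (SimplexCategory.δ (Fin.last (n+1))))
      (Subfunctor.toRange (X.lastFaceMap y)) ⟶ X :=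
  pushout.desc ((yonedaEquiv (X := X) (n := ⦋n+1⦌)).symm y) (Subfunctor.range (X.lastFaceMap y)).ι
    (by rw [yonedaEquiv_symm_naturality']; exact (Subfunctor.toRange_ι _).symm)

/-- A simplicial set is regular if, for each of its non-degenerate simplices `y`,
the canonical map from the pushout `Δ[n+1] ⊔_{Δ[n]} Y'` to `X` is degreewise injective. -/
def IsRegular : Prop :=
  ∀ (n : ℕ) (y : X _⦋n+1⦌), X.Nondegenerate y →
    ∀ (k : SimplexCategoryᵒᵖ), Function.Injective ((X.regularityMap y).app k)

end SSet


universe u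

/-
Regularity says that for a non-degenerate `(n+1)`-simplex `y`, two distinct operators `α ≠ β` with
`α^* y = β^* y` both factor through the last face `δₙ₊₁` (`isRegular_iff`). Everything is checked
levelwise on pushouts of sets: `inl` glues only elements coming from `Δ[n]`, and conversely the
condition makes the outer square `Δ[n] ⟶ Y' ⟶ X`, `Δ[n] ⟶ Δ[n+1] ⟶ X` a pullback, which is what
injectivity of the induced map out of the pushout requires.

For a product, write every component as `y_j = θ_j^* z_j` with `θ_j` epi and `z_j` non-degenerate.
If every `θ_j` identified `α` and `β`, all of them would factor through one degeneracy `σᵢ` and `y`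
would be degenerate. So some `θ_j` separates them; regularity of `X_j` at `z_j` puts `α ≫ θ_j`, and
hence `α`, in the last face, because an epi preserves the last vertex.
-/
namespace CategoryTheory.Limits.Types

lemma eq_of_isPushout_of_notMem_range {X₁ X₂ X₃ X₄ : Type u} {t : X₁ ⟶ X₂} {l : X₁ ⟶ X₃}
    {r : X₂ ⟶ X₄} {b : X₃ ⟶ X₄} (h : IsPushout t l r b) {x y : X₂} (hxy : r x = r y)
    (hx : x ∉ Set.range t) : x = y := by
  classical
  let sep : X₂ ⟶ Option X₂ := ↾fun z => if z ∈ Set.range t then none else some z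
  have hsep : t ≫ sep = l ≫ ↾fun _ => none := by
    ext s
    simp [sep]
  have hr (z : X₂) : h.desc sep _ hsep (r z) = sep z :=
    ConcreteCategory.congr_hom (h.inl_desc sep _ hsep) z
  have := hr x ▸ hr y ▸ congrArg (h.desc sep _ hsep) hxy
  by_cases hy : y ∈ Set.range t <;> simp_all [sep]

end CategoryTheory.Limits.Types

namespace SimplexCategory

lemma exists_forall_eq_σ_comp_of_comp_eq {ι : Type*} {s : SimplexCategory} {n : ℕ}
    {α β : s ⟶ ⦋n + 1⦌} (hαβ : α ≠ β) {m : ι → SimplexCategory} (θ : ∀ j, ⦋n + 1⦌ ⟶ m j)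
    (h : ∀ j, α ≫ θ j = β ≫ θ j) : ∃ i : Fin (n + 1), ∀ j, ∃ θ', θ j = σ i ≫ θ' := by
  obtain ⟨v, hv⟩ : ∃ v, α.toOrderHom v ≠ β.toOrderHom v := by
    by_contra! hv
    exact hαβ (by ext v : 3; exact hv v)
  wlog hlt : α.toOrderHom v < β.toOrderHom v generalizing α β
  · exact this hαβ.symm (fun j => (h j).symm) hv.symm (lt_of_le_of_ne (not_lt.1 hlt) hv.symm)
  refine ⟨(α.toOrderHom v).castPred (Fin.ne_last_of_lt hlt),
    fun j => eq_σ_comp_of_not_injective' _ _ ?_⟩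
  have hθ : (θ j).toOrderHom (α.toOrderHom v) = (θ j).toOrderHom (β.toOrderHom v) :=
    congr_toOrderHom_apply (h j) v
  apply le_antisymm
  · exact (θ j).toOrderHom.monotone Fin.castSucc_lt_succ.le
  · rw [Fin.castSucc_castPred, hθ]
    exact (θ j).toOrderHom.monotone ((Fin.succ_castPred_le_iff _).mpr hlt)

lemma toOrderHom_last_of_epi {n m : ℕ} (θ : ⦋n⦌ ⟶ ⦋m⦌) [Epi θ] :
    θ.toOrderHom (Fin.last n) = Fin.last m := by
  obtain ⟨x, hx⟩ := epi_iff_surjective.mp ‹Epi θ› (Fin.last m)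
  exact le_antisymm (Fin.le_last _) (hx ▸ θ.toOrderHom.monotone (Fin.le_last x))

lemma exists_eq_comp_δ_last_of_comp_epi {s : SimplexCategory} {n m : ℕ} {α : s ⟶ ⦋n + 1⦌}
    (θ : ⦋n + 1⦌ ⟶ ⦋m + 1⦌) [Epi θ] (h : ∃ γ, α ≫ θ = γ ≫ δ (Fin.last (m + 1))) :
    ∃ γ, α = γ ≫ δ (Fin.last (n + 1)) := by
  obtain ⟨γ, hγ⟩ := h
  refine eq_comp_δ_of_not_surjective' α _ fun x hx =>
    Fin.succAbove_ne (Fin.last (m + 1)) (γ.toOrderHom x) ?_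
  change (γ ≫ δ (Fin.last (m + 1))).toOrderHom x = _
  rw [← congr_toOrderHom_apply hγ x, comp_toOrderHom, OrderHom.comp_coe, Function.comp_apply, hx,
    toOrderHom_last_of_epi]

end SimplexCategory

namespace SSet

variable {X : SSet.{u}}

lemma nondegenerate_of_mem_nonDegenerate {n : ℕ} {y : X _⦋n⦌} (hy : y ∈ X.nonDegenerate n) :
    X.Nondegenerate y := by
  rintro ⟨m, f, z, hm, rfl⟩
  exact hy ⟨m, hm, f, z, rfl⟩

variable (X) in
def InjectiveOffLastFace {n : ℕ} (y : X _⦋n + 1⦌) : Prop :=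
  ∀ ⦃s : SimplexCategory⦄ (α β : s ⟶ ⦋n + 1⦌), X.map α.op y = X.map β.op y → α ≠ β →
    ∃ γ, α = γ ≫ SimplexCategory.δ (Fin.last (n + 1))

lemma regularityMap_app_inl {n : ℕ} (y : X _⦋n + 1⦌) {s : SimplexCategory} (α : s ⟶ ⦋n + 1⦌) :
    (X.regularityMap y).app (op s)
      ((pushout.inl (SSet.stdSimplex.map (SimplexCategory.δ (Fin.last (n + 1))))
        (Subfunctor.toRange (X.lastFaceMap y))).app (op s) (stdSimplex.objEquiv.symm α)) =
      X.map α.op y := by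
  rw [← NatTrans.comp_app_apply, regularityMap, pushout.inl_desc]
  rfl

lemma InjectiveOffLastFace.isPullback {n : ℕ} {y : X _⦋n + 1⦌} (hy : X.InjectiveOffLastFace y)
    (k : SimplexCategoryᵒᵖ) :
    IsPullback ((Subfunctor.toRange (X.lastFaceMap y)).app k)
      ((SSet.stdSimplex.map (SimplexCategory.δ (Fin.last (n + 1)))).app k)
      ((Subfunctor.range (X.lastFaceMap y)).ι.app k) ((yonedaEquiv.symm y).app k) := by
  have hδ := (mono_iff_injective ((stdSimplex.{u}.δ (Fin.last (n + 1))).app k)).1 inferInstance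
  rw [Types.isPullback_iff]
  refine ⟨?_, fun x x' hxx' => hδ hxx'.2, ?_⟩
  · rw [← NatTrans.comp_app, ← NatTrans.comp_app, Subfunctor.toRange_ι,
      yonedaEquiv_symm_naturality']
    rfl
  · have hface (γ : Δ[n].obj k) : (X.lastFaceMap y).app k γ =
        X.map (stdSimplex.objEquiv γ ≫ SimplexCategory.δ (Fin.last (n + 1))).op y := by
      rw [op_comp, Functor.map_comp_apply]
      rfl
    rintro ⟨w, γ, rfl⟩ α hα
    obtain ⟨γ', hγ'⟩ :
        ∃ γ', stdSimplex.objEquiv α = γ' ≫ SimplexCategory.δ (Fin.last (n + 1)) := by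
      by_cases hα' :
          stdSimplex.objEquiv α = stdSimplex.objEquiv γ ≫ SimplexCategory.δ (Fin.last (n + 1))
      · exact ⟨_, hα'⟩
      · exact hy _ _ (hα.symm.trans (hface γ)) hα'
    refine ⟨stdSimplex.objEquiv.symm γ', Subtype.ext ?_, stdSimplex.objEquiv.injective hγ'.symm⟩
    change (X.lastFaceMap y).app k _ = _
    rw [hface, Equiv.apply_symm_apply, ← hγ']
    exact hα.symm

theorem isRegular_iff : X.IsRegular ↔
    ∀ (n : ℕ) (y : X _⦋n + 1⦌), X.Nondegenerate y → X.InjectiveOffLastFace y := by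
  constructor
  · intro hX n y hy s α β heq hne
    by_contra hα
    rw [← regularityMap_app_inl, ← regularityMap_app_inl] at heq
    exact hne (stdSimplex.objEquiv.symm.injective (Types.eq_of_isPushout_of_notMem_range
      ((IsPushout.of_hasPushout _ _).app (op s)) (hX n y hy (op s) heq)
      (by rintro ⟨γ, hγ⟩; exact hα ⟨_, (congrArg stdSimplex.objEquiv hγ).symm⟩)))
  · intro h n y hy k
    rw [← mono_iff_injective]
    refine Types.mono_of_isPushout_of_isPullback ((IsPushout.of_hasPushout _ _).app k).flip
      ((h n y hy).isPullback k) ?_ ?_ ?_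
    · rw [← NatTrans.comp_app, regularityMap, pushout.inr_desc]
    · rw [← NatTrans.comp_app, regularityMap, pushout.inl_desc]
    · intro α β hα hβ heq
      by_contra hne
      obtain ⟨γ, hγ⟩ := h n y hy _ _ heq (fun h' => hne (stdSimplex.objEquiv.injective h'))
      exact hα ⟨stdSimplex.objEquiv.symm γ, stdSimplex.objEquiv.injective hγ.symm⟩

lemma IsRegular.exists_eq_comp_δ_last_of_epi (hX : X.IsRegular) {n m : ℕ} {z : X _⦋m⦌}
    (hz : X.Nondegenerate z) (θ : ⦋n + 1⦌ ⟶ ⦋m⦌) [Epi θ] {s : SimplexCategory}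
    {α β : s ⟶ ⦋n + 1⦌} (heq : X.map α.op (X.map θ.op z) = X.map β.op (X.map θ.op z))
    (hne : α ≫ θ ≠ β ≫ θ) : ∃ γ, α = γ ≫ SimplexCategory.δ (Fin.last (n + 1)) := by
  cases m with
  | zero => exact absurd (by ext v : 3; exact Subsingleton.elim (α := Fin 1) _ _) hne
  | succ m =>
    rw [← Functor.map_comp_apply, ← Functor.map_comp_apply, ← op_comp, ← op_comp] at heq
    exact SimplexCategory.exists_eq_comp_δ_last_of_comp_epi θ
      (isRegular_iff.1 hX m z hz _ _ heq hne)

lemma exists_pi_map_eq {J : Type u} (Xs : J → SSet.{u}) {m n : SimplexCategory} (f : m ⟶ n)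
    (y : (∏ᶜ Xs).obj (op m)) (h : ∀ j, ∃ z, (Xs j).map f.op z = (Pi.π Xs j).app _ y) :
    ∃ w, (∏ᶜ Xs).map f.op w = y := by
  choose z hz using h
  refine ⟨yonedaEquiv (Pi.lift fun j => yonedaEquiv.symm (z j)), yonedaEquiv.symm.injective ?_⟩
  refine Pi.hom_ext _ _ fun j => ?_
  rw [← yonedaEquiv_symm_naturality_left, Category.assoc, Equiv.symm_apply_apply, Pi.lift_π,
    yonedaEquiv_symm_naturality_left, hz, yonedaEquiv_symm_comp]

lemma exists_comp_ne_of_nondegenerate_pi {J : Type u} (Xs : J → SSet.{u}) {n : ℕ}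
    {y : (∏ᶜ Xs) _⦋n + 1⦌} (hy : (∏ᶜ Xs).Nondegenerate y) {m : J → ℕ}
    (θ : ∀ j, ⦋n + 1⦌ ⟶ ⦋m j⦌) (z : ∀ j, (Xs j) _⦋m j⦌)
    (hz : ∀ j, (Pi.π Xs j).app _ y = (Xs j).map (θ j).op (z j)) {s : SimplexCategory}
    {α β : s ⟶ ⦋n + 1⦌} (hαβ : α ≠ β) : ∃ j, α ≫ θ j ≠ β ≫ θ j := by
  by_contra! hθ
  obtain ⟨i, hi⟩ := SimplexCategory.exists_forall_eq_σ_comp_of_comp_eq hαβ θ hθ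
  choose θ' hθ' using hi
  obtain ⟨w, hw⟩ := exists_pi_map_eq Xs (SimplexCategory.σ i) y fun j =>
    ⟨(Xs j).map (θ' j).op (z j), by rw [hz, hθ', op_comp, Functor.map_comp_apply]⟩
  exact hy ⟨n, SimplexCategory.σ i, w, n.lt_succ_self, hw.symm⟩

end SSet

/-- An arbitrary product of regular simplicial sets is regular. -/
theorem isRegular_product {J : Type u} (Xs : J → SSet.{u}) (h : ∀ j, (Xs j).IsRegular) :
    SSet.IsRegular (∏ᶜ Xs) := by
  refine SSet.isRegular_iff.2 fun n y hy s α β hαβ hne => ?_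
  choose m θ _ z hz using fun j => (Xs j).exists_nonDegenerate ((Pi.π Xs j).app _ y)
  obtain ⟨j, hj⟩ := SSet.exists_comp_ne_of_nondegenerate_pi Xs hy θ (fun j => (z j).1) hz hne
  refine (h j).exists_eq_comp_δ_last_of_epi (SSet.nondegenerate_of_mem_nonDegenerate (z j).2)
    (θ j) ?_ hj
  rw [← hz j, ← NatTrans.naturality_apply, ← NatTrans.naturality_apply, hαβ]
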